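/- arXiv:1304.4005 — 2 statements merged into one kernel-verified Lean document; each statement's English description precedes it below -/
import Mathlib

section
/- Lemma 1(b): Let F1, F2 be distinct points in the plane, and let u1, u2 be two points on a common ray from F2. Let E1 and H1 be the ellipse and hyperbola branch with foci F1, F2 through u1, and E2, H2 those through u2. Take a ray from F1 intersecting E1 at e1 and H1 at h1. Let the ray F2e1 intersect E2 at e2 and the ray F2h1 intersect H2 at h2. Then e2, h2, and F1 are collinear. -/
/-!
Write `A`, `B` for the distances of a point to `F₁`, `F₂` and `L = |F₁F₂|`. By the half-angle
formula, the angles `α` at `F₁` and `β` at `F₂` of the triangle `p F₁ F₂` satisfy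
`tan² (α / 2) = σ δ` and `tan² (β / 2) = σ / δ`, where `σ = (A + B - L) / (A + B + L)` is constant
on each ellipse and `δ = (L - (A - B)) / (L + (A - B))` is constant on each hyperbola branch.
So, off the line `F₁F₂`, rays from `F₁` are level sets of `σ δ` and rays from `F₂` level sets of
`σ / δ`. In the coordinates `(log σ, log δ)` all four families of curves are lines, and the claim
reduces to a linear identity.
-/

open EuclideanGeometry Module Real

noncomputable def tanHalfSq (θ : ℝ) : ℝ := (1 - cos θ) / (1 + cos θ)

lemma tanHalfSq_pos {θ : ℝ} (h₀ : 0 < θ) (hπ : θ < π) : 0 < tanHalfSq θ := by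
  have h₁ : cos θ < 1 := by simpa using cos_lt_cos_of_nonneg_of_le_pi le_rfl hπ.le h₀
  have h₂ : -1 < cos θ := by simpa using cos_lt_cos_of_nonneg_of_le_pi h₀.le le_rfl hπ
  exact div_pos (by linarith) (by linarith)

lemma tanHalfSq_injOn : Set.InjOn tanHalfSq (Set.Ico 0 π) := by
  have one_add_cos_pos {x : ℝ} (hx : x ∈ Set.Ico 0 π) : 0 < 1 + cos x := by
    have := cos_lt_cos_of_nonneg_of_le_pi hx.1 le_rfl hx.2
    rw [cos_pi] at this
    linarith
  intro θ hθ φ hφ h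
  rw [tanHalfSq, tanHalfSq, div_eq_div_iff (one_add_cos_pos hθ).ne' (one_add_cos_pos hφ).ne'] at h
  exact injOn_cos (Set.Ico_subset_Icc_self hθ) (Set.Ico_subset_Icc_self hφ) (by linarith)

-- The identity of the header in `(log σ, log δ)`-coordinates, at the points `e₁, e₂, h₁, h₂`.
lemma mul_eq_mul_of_div_relations {σe₁ σe₂ σh₁ σh₂ δe₁ δe₂ δh₁ δh₂ : ℝ} (hσe₁ : σe₁ ≠ 0)
    (hδe₁ : δe₁ ≠ 0) (hδe₂ : δe₂ ≠ 0) (hδh₁ : δh₁ ≠ 0) (hδh₂ : δh₂ ≠ 0)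
    (hu : σe₁ / δh₁ = σe₂ / δh₂) (h₁ : σe₁ * δe₁ = σh₁ * δh₁)
    (he : σe₂ / δe₂ = σe₁ / δe₁) (hh : σh₂ / δh₂ = σh₁ / δh₁) :
    σe₂ * δe₂ = σh₂ * δh₂ := by
  rw [div_eq_div_iff hδh₁ hδh₂] at hu
  rw [div_eq_div_iff hδe₂ hδe₁] at he
  rw [div_eq_div_iff hδh₂ hδh₁] at hh
  apply mul_left_cancel₀ (mul_ne_zero (mul_ne_zero hσe₁ hσe₁) hδh₁)
  linear_combination -(σe₁ * δh₁ * σe₂) * he - σe₁ ^ 2 * δh₂ * hh + σe₂ ^ 2 * δh₁ * h₁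
    - σh₁ * (σe₂ * δh₁ + σe₁ * δh₂) * hu

section Affine

variable {V P : Type*} [NormedAddCommGroup V] [InnerProductSpace ℝ V] [MetricSpace P]
  [NormedAddTorsor V P]

noncomputable def ellipseParam (F₁ F₂ p : P) : ℝ :=
  (dist p F₁ + dist p F₂ - dist F₁ F₂) / (dist p F₁ + dist p F₂ + dist F₁ F₂)

noncomputable def hyperbolaParam (F₁ F₂ p : P) : ℝ :=
  (dist F₁ F₂ - (dist p F₁ - dist p F₂)) / (dist F₁ F₂ + (dist p F₁ - dist p F₂))

lemma ellipseParam_eq_of_dist_add_dist_eq {F₁ F₂ p q : P}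
    (h : dist p F₁ + dist p F₂ = dist q F₁ + dist q F₂) :
    ellipseParam F₁ F₂ p = ellipseParam F₁ F₂ q := by
  rw [ellipseParam, ellipseParam, h]

lemma hyperbolaParam_eq_of_dist_sub_dist_eq {F₁ F₂ p q : P}
    (h : dist p F₁ - dist p F₂ = dist q F₁ - dist q F₂) :
    hyperbolaParam F₁ F₂ p = hyperbolaParam F₁ F₂ q := by
  rw [hyperbolaParam, hyperbolaParam, h]

lemma tanHalfSq_angle (p F G : P) (hp : p ≠ F) (hFG : F ≠ G) :
    tanHalfSq (∠ p F G) = (dist p F + dist p G - dist F G) * (dist F G - dist p F + dist p G) /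
      ((dist p F + dist p G + dist F G) * (dist F G + dist p F - dist p G)) := by
  have hlaw := law_cos p F G
  rw [dist_comm G F] at hlaw
  have hAL : 2 * dist p F * dist F G ≠ 0 := by
    have := dist_pos.2 hp
    have := dist_pos.2 hFG
    positivity
  rw [tanHalfSq, ← mul_div_mul_left _ _ hAL]
  congr 1
  · linear_combination -hlaw
  · linear_combination hlaw

lemma tanHalfSq_angle_left {F₁ F₂ p : P} (hp : p ≠ F₁) (hF : F₁ ≠ F₂) :
    tanHalfSq (∠ p F₁ F₂) = ellipseParam F₁ F₂ p * hyperbolaParam F₁ F₂ p := by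
  rw [tanHalfSq_angle p F₁ F₂ hp hF, ellipseParam, hyperbolaParam, div_mul_div_comm]
  congr 1 <;> ring

lemma tanHalfSq_angle_right {F₁ F₂ p : P} (hp : p ≠ F₂) (hF : F₁ ≠ F₂) :
    tanHalfSq (∠ p F₂ F₁) = ellipseParam F₁ F₂ p / hyperbolaParam F₁ F₂ p := by
  rw [tanHalfSq_angle p F₂ F₁ hp hF.symm, ellipseParam, hyperbolaParam, div_div_div_eq,
    dist_comm F₂ F₁]
  congr 1 <;> ring

lemma angle_eq_of_sameRay {F G p q : P} (h : SameRay ℝ (p -ᵥ F) (q -ᵥ F)) (hp : p ≠ F)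
    (hq : q ≠ F) : ∠ p F G = ∠ q F G := by
  obtain ⟨r, hr, hrq⟩ := h.exists_pos_left (vsub_ne_zero.2 hp) (vsub_ne_zero.2 hq)
  rw [angle, angle, ← hrq, InnerProductGeometry.angle_smul_left_of_pos _ _ hr]

variable {F₁ F₂ p : P}

lemma ne_of_notMem_line (hp : p ∉ line[ℝ, F₁, F₂]) : p ≠ F₁ :=
  fun h ↦ hp (h ▸ left_mem_affineSpan_pair ℝ F₁ F₂)

lemma not_collinear_of_notMem_line (hF : F₁ ≠ F₂) (hp : p ∉ line[ℝ, F₁, F₂]) :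
    ¬ Collinear ℝ {p, F₁, F₂} := fun h ↦
  hp (h.mem_affineSpan_of_mem_of_ne (by simp) (by simp) (by simp) hF)

lemma angle_lt_pi_of_notMem_line (hF : F₁ ≠ F₂) (hp : p ∉ line[ℝ, F₁, F₂]) :
    ∠ p F₁ F₂ < π :=
  angle_lt_pi_of_not_collinear (not_collinear_of_notMem_line hF hp)

lemma ellipseParam_mul_hyperbolaParam_pos (hF : F₁ ≠ F₂) (hp : p ∉ line[ℝ, F₁, F₂]) :
    0 < ellipseParam F₁ F₂ p * hyperbolaParam F₁ F₂ p := by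
  rw [← tanHalfSq_angle_left (ne_of_notMem_line hp) hF]
  exact tanHalfSq_pos (angle_pos_of_not_collinear (not_collinear_of_notMem_line hF hp))
    (angle_lt_pi_of_notMem_line hF hp)

lemma ellipseParam_ne_zero (hF : F₁ ≠ F₂) (hp : p ∉ line[ℝ, F₁, F₂]) :
    ellipseParam F₁ F₂ p ≠ 0 :=
  left_ne_zero_of_mul (ellipseParam_mul_hyperbolaParam_pos hF hp).ne'

lemma hyperbolaParam_ne_zero (hF : F₁ ≠ F₂) (hp : p ∉ line[ℝ, F₁, F₂]) :
    hyperbolaParam F₁ F₂ p ≠ 0 :=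
  right_ne_zero_of_mul (ellipseParam_mul_hyperbolaParam_pos hF hp).ne'

lemma collinear_of_angle_eq_of_sSameSide [Fact (finrank ℝ V = 2)] {q : P} (hF : F₁ ≠ F₂)
    (h : ∠ p F₁ F₂ = ∠ q F₁ F₂) (hs : line[ℝ, F₁, F₂].SSameSide p q) :
    Collinear ℝ {p, q, F₁} := by
  have : FiniteDimensional ℝ V := .of_fact_finrank_eq_two
  let : Module.Oriented ℝ V (Fin 2) := ⟨(finBasisOfFinrankEq ℝ V Fact.out).orientation⟩
  have hsign : (∡ p F₁ F₂).sign = (∡ q F₁ F₂).sign := by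
    rw [oangle_rotate_sign F₂ p F₁, oangle_rotate_sign F₂ q F₁, ← oangle_swap₁₃_sign F₁ p F₂,
      ← oangle_swap₁₃_sign F₁ q F₂, hs.oangle_sign_eq (left_mem_affineSpan_pair ℝ F₁ F₂)
        (right_mem_affineSpan_pair ℝ F₁ F₂)]
  have hpq : ∡ p F₁ q = 0 := by
    rw [← oangle_add (ne_of_notMem_line hs.left_notMem) hF.symm
      (ne_of_notMem_line hs.right_notMem), oangle_eq_of_angle_eq_of_sign_eq h hsign,
      oangle_rev q, add_neg_cancel]
  rw [Set.pair_comm]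
  exact oangle_eq_zero_or_eq_pi_iff_collinear.1 (.inl hpq)

end Affine

theorem stmt3
    (F1 F2 u1 u2 e1 h1 e2 h2 : EuclideanSpace ℝ (Fin 2))
    (hF : F1 ≠ F2)
    (hne : u1 ≠ F1 ∧ u1 ≠ F2 ∧ u2 ≠ F1 ∧ u2 ≠ F2 ∧ e1 ≠ F1 ∧ e1 ≠ F2 ∧
           h1 ≠ F1 ∧ h1 ≠ F2 ∧ e2 ≠ F1 ∧ e2 ≠ F2 ∧ h2 ≠ F1 ∧ h2 ≠ F2)
    -- u1, u2 on a common ray from F2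
    (hrayu : SameRay ℝ (u1 - F2) (u2 - F2))
    -- e1 and h1 on a common ray from F1
    (hrayF1 : SameRay ℝ (e1 - F1) (h1 - F1))
    -- e1 on the ellipse through u1, h1 on the hyperbola branch through u1
    (he1 : dist e1 F1 + dist e1 F2 = dist u1 F1 + dist u1 F2)
    (hh1 : dist h1 F1 - dist h1 F2 = dist u1 F1 - dist u1 F2)
    -- e2 on ray F2 e1 and on the ellipse through u2
    (hraye2 : SameRay ℝ (e2 - F2) (e1 - F2))
    (he2 : dist e2 F1 + dist e2 F2 = dist u2 F1 + dist u2 F2)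
    -- h2 on ray F2 h1 and on the hyperbola branch through u2
    (hrayh2 : SameRay ℝ (h2 - F2) (h1 - F2))
    (hh2 : dist h2 F1 - dist h2 F2 = dist u2 F1 - dist u2 F2)
    -- nondegeneracy: points strictly on one side of line F1F2
    (hside : (affineSpan ℝ {F1, F2}).SSameSide e1 h1 ∧
             (affineSpan ℝ {F1, F2}).SSameSide e1 e2 ∧
             (affineSpan ℝ {F1, F2}).SSameSide e1 h2) :
    Collinear ℝ ({e2, h2, F1} : Set (EuclideanSpace ℝ (Fin 2))) := by
  obtain ⟨-, hu1F2, -, hu2F2, he1F1, he1F2, hh1F1, hh1F2, he2F1, he2F2, hh2F1, hh2F2⟩ := hne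
  have : Fact (finrank ℝ (EuclideanSpace ℝ (Fin 2)) = 2) := ⟨finrank_euclideanSpace_fin⟩
  have hprod : ellipseParam F1 F2 e2 * hyperbolaParam F1 F2 e2 =
      ellipseParam F1 F2 h2 * hyperbolaParam F1 F2 h2 := by
    refine mul_eq_mul_of_div_relations (σh₁ := ellipseParam F1 F2 h1)
      (ellipseParam_ne_zero hF hside.1.2.1) (hyperbolaParam_ne_zero hF hside.1.2.1)
      (hyperbolaParam_ne_zero hF hside.2.1.2.2) (hyperbolaParam_ne_zero hF hside.1.2.2)
      (hyperbolaParam_ne_zero hF hside.2.2.2.2) ?_ ?_ ?_ ?_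
    · rw [ellipseParam_eq_of_dist_add_dist_eq he1, hyperbolaParam_eq_of_dist_sub_dist_eq hh1,
        ellipseParam_eq_of_dist_add_dist_eq he2, hyperbolaParam_eq_of_dist_sub_dist_eq hh2,
        ← tanHalfSq_angle_right hu1F2 hF, ← tanHalfSq_angle_right hu2F2 hF,
        angle_eq_of_sameRay hrayu hu1F2 hu2F2]
    · rw [← tanHalfSq_angle_left he1F1 hF, ← tanHalfSq_angle_left hh1F1 hF,
        angle_eq_of_sameRay hrayF1 he1F1 hh1F1]
    · rw [← tanHalfSq_angle_right he2F2 hF, ← tanHalfSq_angle_right he1F2 hF,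
        angle_eq_of_sameRay hraye2 he2F2 he1F2]
    · rw [← tanHalfSq_angle_right hh2F2 hF, ← tanHalfSq_angle_right hh1F2 hF,
        angle_eq_of_sameRay hrayh2 hh2F2 hh1F2]
  have hangle : ∠ e2 F1 F2 = ∠ h2 F1 F2 := by
    refine tanHalfSq_injOn ⟨angle_nonneg _ _ _, angle_lt_pi_of_notMem_line hF hside.2.1.2.2⟩
      ⟨angle_nonneg _ _ _, angle_lt_pi_of_notMem_line hF hside.2.2.2.2⟩ ?_
    rw [tanHalfSq_angle_left he2F1 hF, tanHalfSq_angle_left hh2F1 hF, hprod]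
  exact collinear_of_angle_eq_of_sSameSide hF hangle (hside.2.1.symm.trans hside.2.2)
end

section
/- Let α, β, γ ∈ (0, π) with α + γ < π and β + γ < π, and assume cos((α−β)/2) ≠ 0 and sin(γ + (α+β)/2) + sin((β−α)/2) ≠ 0. Define a1 = sin α / sin(α+γ), b1 = sin γ / sin(α+γ), a2 = sin β / sin(β+γ), b2 = sin γ / sin(β+γ), c = ½(−a1 + b1 + a2 + b2), and suppose c > 0. If φ ∈ (0, π) satisfies 1 + c² − 2c·cos φ = ¼(a1 − b1 + a2 + b2)², then cos φ = cos((α+β)/2) / cos((α−β)/2). -/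
/-!
The relation `1 + c² - 2c cos φ = d²` with `c = (v - u) / 2`, `d = (u + v) / 2`, where
`u = a₁ - b₁` and `v = a₂ + b₂`, says `(v - u) cos φ = 1 - u v`. By the sum-to-product formulas,
`u = sin ((α - γ)/2) / sin ((α + γ)/2)` and `v = cos ((β - γ)/2) / cos ((β + γ)/2)`, and after
clearing denominators both `(v - u)` and `1 - u v` become `sin γ` times a half-angle cosine,
which gives `cos φ = cos ((α + β)/2) / cos ((α - β)/2)`.
-/

open Real

lemma sin_eq_two_mul_sin_half_mul_cos_half (a : ℝ) : sin a = 2 * sin (a / 2) * cos (a / 2) := by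
  rw [← sin_two_mul, mul_div_cancel₀ a two_ne_zero]

lemma sin_sub_sin_div_sin_add {a b : ℝ} (h : cos ((a + b) / 2) ≠ 0) :
    (sin a - sin b) / sin (a + b) = sin ((a - b) / 2) / sin ((a + b) / 2) := by
  rw [sin_sub_sin, sin_eq_two_mul_sin_half_mul_cos_half (a + b), mul_div_mul_right _ _ h,
    mul_div_mul_left _ _ two_ne_zero]

lemma sin_add_sin_div_sin_add {a b : ℝ} (h : sin ((a + b) / 2) ≠ 0) :
    (sin a + sin b) / sin (a + b) = cos ((a - b) / 2) / cos ((a + b) / 2) := by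
  rw [sin_add_sin, sin_eq_two_mul_sin_half_mul_cos_half (a + b), mul_assoc, mul_assoc,
    mul_div_mul_left _ _ two_ne_zero, mul_div_mul_left _ _ h]

lemma cos_sub_mul_sin_add_sub_sin_sub_mul_cos_add (x y z : ℝ) :
    cos (y - z) * sin (x + z) - sin (x - z) * cos (y + z) = sin (2 * z) * cos (x - y) := by
  simp only [sin_add, cos_add, sin_sub, cos_sub, sin_two_mul]
  ring

lemma sin_add_mul_cos_add_sub_sin_sub_mul_cos_sub (x y z : ℝ) :
    sin (x + z) * cos (y + z) - sin (x - z) * cos (y - z) = sin (2 * z) * cos (x + y) := by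
  simp only [sin_add, cos_add, sin_sub, cos_sub, sin_two_mul]
  ring

lemma sub_mul_cos_add_eq_one_sub_mul_mul_cos_sub (x y z : ℝ) (hx : sin (x + z) ≠ 0)
    (hy : cos (y + z) ≠ 0) :
    (cos (y - z) / cos (y + z) - sin (x - z) / sin (x + z)) * cos (x + y)
      = (1 - sin (x - z) / sin (x + z) * (cos (y - z) / cos (y + z))) * cos (x - y) := by
  field_simp
  linear_combination cos (x + y) * cos_sub_mul_sin_add_sub_sin_sub_mul_cos_add x y z
    - cos (x - y) * sin_add_mul_cos_add_sub_sin_sub_mul_cos_sub x y z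

theorem stmt7_general (α β γ φ a1 b1 a2 b2 c : ℝ)
    (hα : α ∈ Set.Ioo 0 π) (hβ : β ∈ Set.Ioo 0 π) (hγ : γ ∈ Set.Ioo 0 π)
    (hαγ : α + γ < π) (hβγ : β + γ < π)
    (hcosne : Real.cos ((α - β) / 2) ≠ 0)
    (ha1 : a1 = Real.sin α / Real.sin (α + γ))
    (hb1 : b1 = Real.sin γ / Real.sin (α + γ))
    (ha2 : a2 = Real.sin β / Real.sin (β + γ))
    (hb2 : b2 = Real.sin γ / Real.sin (β + γ))
    (hc : c = (1 / 2) * (-a1 + b1 + a2 + b2))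
    (hcpos : 0 < c)
    (heq : 1 + c ^ 2 - 2 * c * Real.cos φ = (1 / 4) * (a1 - b1 + a2 + b2) ^ 2) :
    Real.cos φ = Real.cos ((α + β) / 2) / Real.cos ((α - β) / 2) := by
  have hαγ₀ : (α + γ) / 2 ∈ Set.Ioo 0 (π / 2) := ⟨by linarith [hα.1, hγ.1], by linarith⟩
  have hβγ₀ : (β + γ) / 2 ∈ Set.Ioo 0 (π / 2) := ⟨by linarith [hβ.1, hγ.1], by linarith⟩
  have hsinαγ := sin_pos_of_pos_of_lt_pi hαγ₀.1 (by linarith [hαγ₀.2, pi_pos])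
  have hsinβγ := sin_pos_of_pos_of_lt_pi hβγ₀.1 (by linarith [hβγ₀.2, pi_pos])
  have hcosαγ := cos_pos_of_mem_Ioo ⟨by linarith [hαγ₀.1], hαγ₀.2⟩
  have hcosβγ := cos_pos_of_mem_Ioo ⟨by linarith [hβγ₀.1], hβγ₀.2⟩
  have hu : a1 - b1 = sin (α / 2 - γ / 2) / sin (α / 2 + γ / 2) := by
    rw [ha1, hb1, ← sub_div, sin_sub_sin_div_sin_add hcosαγ.ne', sub_div, add_div]
  have hv : a2 + b2 = cos (β / 2 - γ / 2) / cos (β / 2 + γ / 2) := by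
    rw [ha2, hb2, ← add_div, sin_add_sin_div_sin_add hsinβγ.ne', sub_div, add_div]
  have hkey := sub_mul_cos_add_eq_one_sub_mul_mul_cos_sub (α / 2) (β / 2) (γ / 2)
    (by rw [← add_div]; exact hsinαγ.ne') (by rw [← add_div]; exact hcosβγ.ne')
  rw [← hu, ← hv, ← add_div, ← sub_div] at hkey
  have hcos : 2 * c * cos φ = 1 - (a1 - b1) * (a2 + b2) := by
    rw [hc] at heq ⊢
    linear_combination -heq
  rw [eq_div_iff hcosne]
  refine mul_left_cancel₀ (mul_ne_zero two_ne_zero hcpos.ne') ?_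
  rw [← mul_assoc, hcos, ← hkey, hc]
  ring

theorem stmt7 (α β γ φ a1 b1 a2 b2 c : ℝ)
    (hα : α ∈ Set.Ioo 0 π) (hβ : β ∈ Set.Ioo 0 π) (hγ : γ ∈ Set.Ioo 0 π)
    (hαγ : α + γ < π) (hβγ : β + γ < π)
    (hcosne : Real.cos ((α - β) / 2) ≠ 0)
    (hsinne : Real.sin (γ + (α + β) / 2) + Real.sin ((β - α) / 2) ≠ 0)
    (ha1 : a1 = Real.sin α / Real.sin (α + γ))
    (hb1 : b1 = Real.sin γ / Real.sin (α + γ))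
    (ha2 : a2 = Real.sin β / Real.sin (β + γ))
    (hb2 : b2 = Real.sin γ / Real.sin (β + γ))
    (hc : c = (1 / 2) * (-a1 + b1 + a2 + b2))
    (hcpos : 0 < c)
    (hφ : φ ∈ Set.Ioo 0 π)
    (heq : 1 + c ^ 2 - 2 * c * Real.cos φ = (1 / 4) * (a1 - b1 + a2 + b2) ^ 2) :
    Real.cos φ = Real.cos ((α + β) / 2) / Real.cos ((α - β) / 2) :=
  stmt7_general α β γ φ a1 b1 a2 b2 c hα hβ hγ hαγ hβγ hcosne ha1 hb1 ha2 hb2 hc hcpos heq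
end
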